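/- arXiv:1703.10709 — 4 statements merged into one kernel-verified Lean document; each statement's English description precedes it below -/
import Mathlib

section
/- Let A > 0, a > 0, T > 0. Let u be continuous on [−a,a] × [0,T), with u_x, u_xx, u_t continuous on (−a,a) × (0,T), solving the graph flow equation u_t = u_xx/(1 + u_x²) + A√(1 + u_x²) on (−a,a) × (0,T), with u(−a,t) = u(a,t) = 0 for all t ∈ [0,T) and u(x,0) ≥ 0 for all x ∈ [−a,a]. Then u(x,t) > 0 for every x ∈ (−a,a) and t ∈ (0,T). (The point is that the constant function 0 is a strict subsolution, since A√(1+0) = A > 0.) -/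
/-!
Fix `t₀ ∈ (0, T)` and let `(x, t)` minimize `u` over `[-a, a] × [0, t₀]`. If `x ∈ (-a, a)` and
`t > 0`, then `u_x = 0`, `u_xx ≥ 0` and `u_t ≤ 0` there, while the equation gives
`u_t = u_xx + A ≥ A > 0`. So the minimum is attained where `t = 0` or `x = ±a`, hence is `≥ 0`.
Hence if `u x₀ t₀ ≤ 0` with `x₀ ∈ (-a, a)`, then `(x₀, t₀)` is itself such an interior minimum point.
-/

open Set Topology Filter

theorem IsLocalMinOn.hasDerivWithinAt_Iic_nonpos {g : ℝ → ℝ} {g' b : ℝ}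
    (hmin : IsLocalMinOn g (Iic b) b) (hg : HasDerivWithinAt g g' (Iic b) b) : g' ≤ 0 := by
  have hcone : (-1 : ℝ) ∈ posTangentConeAt (Iic b) b :=
    mem_posTangentConeAt_of_segment_subset
      ((convex_Iic b).segment_subset self_mem_Iic (by simp))
  simpa using hmin.hasFDerivWithinAt_nonneg hg hcone

theorem IsLocalMin.nonneg_of_hasDerivAt_of_hasDerivAt {f f' : ℝ → ℝ} {f'' x : ℝ}
    (hmin : IsLocalMin f x) (hf : ∀ᶠ y in 𝓝 x, HasDerivAt f (f' y) y)
    (hf' : HasDerivAt f' f'' x) : 0 ≤ f'' := by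
  by_contra! hneg
  have hsign : ∀ᶠ y in 𝓝 x, SignType.sign (f' y) = SignType.sign (x - y) :=
    eventually_nhdsWithin_sign_eq_of_deriv_neg (hf'.deriv ▸ hneg)
      (hmin.hasDerivAt_eq_zero hf.self_of_nhds)
  obtain ⟨ε, hε, hball⟩ := Metric.eventually_nhds_iff_ball.1 (hmin.and (hf.and hsign))
  have hzx : x - ε / 2 < x := by linarith
  have hIcc : Icc (x - ε / 2) x ⊆ Metric.ball x ε := fun y hy => by
    rw [Real.ball_eq_Ioo]; constructor <;> linarith [hy.1, hy.2]
  -- `f'` is positive just left of `x`, so by the mean value theorem `f` increases up to `x`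
  obtain ⟨c, hc, hslope⟩ := exists_hasDerivAt_eq_slope f f' hzx
    (fun y hy => (hball y (hIcc hy)).2.1.continuousAt.continuousWithinAt)
    (fun y hy => (hball y (hIcc (Ioo_subset_Icc_self hy))).2.1)
  have hpos : 0 < f' c := by
    rw [← sign_eq_one_iff, (hball c (hIcc (Ioo_subset_Icc_self hc))).2.2, sign_eq_one_iff]
    linarith [hc.2]
  have hle : f x ≤ f (x - ε / 2) := (hball _ (hIcc (left_mem_Icc.2 hzx.le))).1
  rw [hslope] at hpos
  exact (div_pos_iff_of_pos_right (by linarith)).1 hpos |>.not_ge (by linarith)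

theorem graphFlow_ne_of_isLocalMin {A x t uxx ut : ℝ} {u ux : ℝ → ℝ → ℝ} (hA : 0 < A)
    (hx : IsLocalMin (u · t) x) (ht : IsLocalMinOn (u x ·) (Iic t) t)
    (hux : ∀ᶠ y in 𝓝 x, HasDerivAt (u · t) (ux y t) y) (huxx : HasDerivAt (ux · t) uxx x)
    (hut : HasDerivAt (u x ·) ut t) :
    ut ≠ uxx / (1 + ux x t ^ 2) + A * √(1 + ux x t ^ 2) := by
  have hux_zero : ux x t = 0 := hx.hasDerivAt_eq_zero hux.self_of_nhds
  have huxx_nonneg : 0 ≤ uxx := hx.nonneg_of_hasDerivAt_of_hasDerivAt hux huxx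
  have hut_nonpos : ut ≤ 0 := ht.hasDerivWithinAt_Iic_nonpos hut.hasDerivWithinAt
  rw [hux_zero]
  norm_num
  linarith

theorem graphFlow_not_isMinOn_Icc_prod_Icc {A p q c d x t : ℝ} {u ux uxx ut : ℝ → ℝ → ℝ}
    (hA : 0 < A) (hx : x ∈ Ioo p q) (ht : t ∈ Ioc c d)
    (hux : ∀ y ∈ Ioo p q, HasDerivAt (u · t) (ux y t) y)
    (huxx : HasDerivAt (ux · t) (uxx x t) x) (hut : HasDerivAt (u x ·) (ut x t) t)
    (hpde : ut x t = uxx x t / (1 + ux x t ^ 2) + A * √(1 + ux x t ^ 2)) :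
    ¬IsMinOn (fun z : ℝ × ℝ => u z.1 z.2) (Icc p q ×ˢ Icc c d) (x, t) := by
  intro hmin
  have hmin_x : IsLocalMin (u · t) x :=
    (hmin.comp_mapsTo (g := fun y => (y, t)) (fun _ hy => ⟨hy, ht.1.le, ht.2⟩) rfl).isLocalMin
      (Icc_mem_nhds hx.1 hx.2)
  have hmin_t : IsLocalMinOn (u x ·) (Iic t) t :=
    (hmin.comp_mapsTo (g := fun τ => (x, τ)) (t := Icc c t)
      (fun _ hτ => ⟨Ioo_subset_Icc_self hx, hτ.1, hτ.2.trans ht.2⟩) rfl).filter_mono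
      (le_principal_iff.2 (Icc_mem_nhdsLE ht.1))
  exact graphFlow_ne_of_isLocalMin hA hmin_x hmin_t
    (eventually_of_mem (Ioo_mem_nhds hx.1 hx.2) hux) huxx hut hpde

theorem strict_positivity_general (A a T : ℝ) (hA : 0 < A)
    (u ux uxx ut : ℝ → ℝ → ℝ)
    (hu_cont : ContinuousOn (fun p : ℝ × ℝ => u p.1 p.2) (Icc (-a) a ×ˢ Ico 0 T))
    (hux : ∀ x ∈ Ioo (-a) a, ∀ t ∈ Ioo (0 : ℝ) T,
      HasDerivAt (fun y => u y t) (ux x t) x)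
    (huxx : ∀ x ∈ Ioo (-a) a, ∀ t ∈ Ioo (0 : ℝ) T,
      HasDerivAt (fun y => ux y t) (uxx x t) x)
    (hut : ∀ x ∈ Ioo (-a) a, ∀ t ∈ Ioo (0 : ℝ) T,
      HasDerivAt (fun τ => u x τ) (ut x t) t)
    (hpde : ∀ x ∈ Ioo (-a) a, ∀ t ∈ Ioo (0 : ℝ) T,
      ut x t = uxx x t / (1 + (ux x t) ^ 2) + A * Real.sqrt (1 + (ux x t) ^ 2))
    (hbc : ∀ t ∈ Ico (0 : ℝ) T, u (-a) t = 0 ∧ u a t = 0)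
    (hic : ∀ x ∈ Icc (-a) a, 0 ≤ u x 0) :
    ∀ x ∈ Ioo (-a) a, ∀ t ∈ Ioo (0 : ℝ) T, 0 < u x t := by
  intro x₀ hx₀ t₀ ht₀
  have no_interior_min : ∀ x ∈ Ioo (-a) a, ∀ t ∈ Ioc 0 t₀,
      ¬IsMinOn (fun p : ℝ × ℝ => u p.1 p.2) (Icc (-a) a ×ˢ Icc 0 t₀) (x, t) := fun x hx t ht =>
    have htT : t ∈ Ioo 0 T := ⟨ht.1, ht.2.trans_lt ht₀.2⟩
    graphFlow_not_isMinOn_Icc_prod_Icc hA hx ht (fun y hy => hux y hy t htT)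
      (huxx x hx t htT) (hut x hx t htT) (hpde x hx t htT)
  obtain ⟨⟨xm, tm⟩, ⟨⟨hxm, hxm'⟩, htm, htm'⟩, hmin⟩ :=
    (isCompact_Icc.prod isCompact_Icc).exists_isMinOn
      ⟨(x₀, t₀), Ioo_subset_Icc_self hx₀, ht₀.1.le, le_rfl⟩
      (hu_cont.mono (prod_mono_right (Icc_subset_Ico_right ht₀.2)))
  have hm_nonneg : 0 ≤ u xm tm := by
    rcases htm.eq_or_lt with rfl | htm
    · exact hic xm ⟨hxm, hxm'⟩
    have hbc_tm := hbc tm ⟨htm.le, htm'.trans_lt ht₀.2⟩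
    rcases hxm.eq_or_lt with rfl | hxm
    · exact hbc_tm.1.ge
    rcases hxm'.eq_or_lt with rfl | hxm'
    · exact hbc_tm.2.ge
    exact (no_interior_min xm ⟨hxm, hxm'⟩ tm ⟨htm, htm'⟩ hmin).elim
  by_contra! hneg
  exact no_interior_min x₀ hx₀ t₀ ⟨ht₀.1, le_rfl⟩ fun p hp =>
    hneg.trans (hm_nonneg.trans (hmin hp))

/-- Strict positivity: if `u` solves the graph flow
`u_t = u_xx/(1+u_x²) + A√(1+u_x²)` on `(-a,a)×(0,T)` with zero boundary values and a
nonnegative initial condition, then `u > 0` in the interior (the zero function is a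
strict subsolution since `A > 0`). -/
theorem strict_positivity (A a T : ℝ) (hA : 0 < A) (ha : 0 < a) (hT : 0 < T)
    (u ux uxx ut : ℝ → ℝ → ℝ)
    (hu_cont : ContinuousOn (fun p : ℝ × ℝ => u p.1 p.2) (Icc (-a) a ×ˢ Ico 0 T))
    (hux : ∀ x ∈ Ioo (-a) a, ∀ t ∈ Ioo (0 : ℝ) T,
      HasDerivAt (fun y => u y t) (ux x t) x)
    (huxx : ∀ x ∈ Ioo (-a) a, ∀ t ∈ Ioo (0 : ℝ) T,
      HasDerivAt (fun y => ux y t) (uxx x t) x)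
    (hut : ∀ x ∈ Ioo (-a) a, ∀ t ∈ Ioo (0 : ℝ) T,
      HasDerivAt (fun τ => u x τ) (ut x t) t)
    (hux_cont : ContinuousOn (fun p : ℝ × ℝ => ux p.1 p.2) (Ioo (-a) a ×ˢ Ioo 0 T))
    (huxx_cont : ContinuousOn (fun p : ℝ × ℝ => uxx p.1 p.2) (Ioo (-a) a ×ˢ Ioo 0 T))
    (hut_cont : ContinuousOn (fun p : ℝ × ℝ => ut p.1 p.2) (Ioo (-a) a ×ˢ Ioo 0 T))
    (hpde : ∀ x ∈ Ioo (-a) a, ∀ t ∈ Ioo (0 : ℝ) T,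
      ut x t = uxx x t / (1 + (ux x t) ^ 2) + A * Real.sqrt (1 + (ux x t) ^ 2))
    (hbc : ∀ t ∈ Ico (0 : ℝ) T, u (-a) t = 0 ∧ u a t = 0)
    (hic : ∀ x ∈ Icc (-a) a, 0 ≤ u x 0) :
    ∀ x ∈ Ioo (-a) a, ∀ t ∈ Ioo (0 : ℝ) T, 0 < u x t :=
  strict_positivity_general A a T hA u ux uxx ut hu_cont hux huxx hut hpde hbc hic
end

section
/- Let A > 0, a > 0, T > 0, and let u : [−a,a] × (0,T) → ℝ have u, u_x, u_t, u_xx, u_xt continuous on [−a,a] × (0,T), satisfy u(−a,t) = u(a,t) = 0 for all t ∈ (0,T), and solve the graph flow equation u_t = u_xx/(1 + u_x²) + A√(1 + u_x²) on (−a,a) × (0,T). Define J(t) = ∫_{−a}^{a} √(1 + u_x(x,t)²) dx and I(t) = ∫_{−a}^{a} u(x,t) dx. Then J and I are differentiable on (0,T) and J′(t) = −∫_{−a}^{a} u_t(x,t)² / √(1 + u_x(x,t)²) dx + A·I′(t) for every t ∈ (0,T). -/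
/-!
Differentiating under the integral sign gives `J' = ∫ u_xt · u_x / √(1 + u_x²)`. Writing
`u(x,t) = u(-a,t) + ∫_{-a}^x u_x` and differentiating in `t` shows that `u_t(·,t)` has
`x`-derivative `u_xt`; since `u` vanishes at `±a` for all times, so does `u_t`, and an
integration by parts turns `J'` into `-∫ u_t · u_xx / (1 + u_x²)^{3/2}`. Along the flow
`u_xx / (1 + u_x²) = u_t - A √(1 + u_x²)`, so this is `-∫ u_t² / √(1 + u_x²) + A ∫ u_t`,
and `∫ u_t = I'` by differentiating under the integral sign once more.
-/

open Set Filter Topology MeasureTheory intervalIntegral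

theorem HasDerivAt.sqrt_one_add_sq {f : ℝ → ℝ} {f' x : ℝ} (hf : HasDerivAt f f' x) :
    HasDerivAt (fun y => √(1 + f y ^ 2)) (f' * (f x / √(1 + f x ^ 2))) x := by
  have h := ((hf.fun_pow 2).const_add 1).sqrt (by positivity)
  refine h.congr_deriv ?_
  field_simp
  ring

theorem HasDerivAt.div_sqrt_one_add_sq {f : ℝ → ℝ} {f' x : ℝ} (hf : HasDerivAt f f' x) :
    HasDerivAt (fun y => f y / √(1 + f y ^ 2)) (f' / ((1 + f x ^ 2) * √(1 + f x ^ 2))) x := by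
  have hs : √(1 + f x ^ 2) ^ 2 = 1 + f x ^ 2 := Real.sq_sqrt (by positivity)
  refine (hf.div hf.sqrt_one_add_sq (by positivity)).congr_deriv ?_
  field_simp
  rw [hs]
  ring

theorem continuous_div_sqrt_one_add_sq : Continuous fun s : ℝ => s / √(1 + s ^ 2) :=
  continuous_id.div (by fun_prop) fun s => by positivity

theorem hasDerivAt_intervalIntegral_of_continuousOn_prod {a b t₀ : ℝ} {U : Set ℝ}
    {F F' : ℝ → ℝ → ℝ} (hab : a ≤ b) (hU : U ∈ 𝓝 t₀)
    (hF : ∀ t ∈ U, ContinuousOn (F · t) (Icc a b))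
    (hF' : ContinuousOn (fun p : ℝ × ℝ => F' p.1 p.2) (Icc a b ×ˢ U))
    (hderiv : ∀ x ∈ Icc a b, ∀ t ∈ U, HasDerivAt (F x ·) (F' x t) t) :
    HasDerivAt (fun t => ∫ x in a..b, F x t) (∫ x in a..b, F' x t₀) t₀ := by
  obtain ⟨c, d, -, hcd, hcdU⟩ := exists_Icc_mem_subset_of_mem_nhds hU
  obtain ⟨C, hC⟩ := (isCompact_Icc.prod isCompact_Icc).exists_bound_of_continuousOn
    (hF'.mono (prod_mono_right hcdU))
  have hsub : uIoc a b ⊆ Icc a b := uIoc_of_le hab ▸ Ioc_subset_Icc_self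
  have ht₀ : t₀ ∈ U := mem_of_mem_nhds hU
  exact (hasDerivAt_integral_of_dominated_loc_of_deriv_le (bound := fun _ => C) hcd
    (eventually_of_mem hU fun t ht =>
      ((hF t ht).mono hsub).aestronglyMeasurable measurableSet_uIoc)
    ((hF t₀ ht₀).intervalIntegrable_of_Icc hab)
    (((hF'.uncurry_right t₀ ht₀).mono hsub).aestronglyMeasurable measurableSet_uIoc)
    (ae_of_all _ fun x hx t ht => hC (x, t) ⟨hsub hx, ht⟩)
    intervalIntegrable_const
    (ae_of_all _ fun x hx t ht => hderiv x (hsub hx) t (hcdU ht))).2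

theorem HasDerivAt.eq_zero_of_eventually_eq_zero {𝕜 E : Type*} [NontriviallyNormedField 𝕜]
    [NormedAddCommGroup E] [NormedSpace 𝕜 E] {f : 𝕜 → E} {f' : E} {t : 𝕜}
    (hf : HasDerivAt f f' t) (h : ∀ᶠ τ in 𝓝 t, f τ = 0) : f' = 0 :=
  hf.unique ((hasDerivAt_const t 0).congr_of_eventuallyEq h)

section MixedPartials

variable {a b : ℝ} {U : Set ℝ} {u ux ut uxt : ℝ → ℝ → ℝ}

theorem timeDeriv_eq_add_integral_mixedPartial (hU : IsOpen U)
    (hux : ∀ x ∈ Icc a b, ∀ t ∈ U, HasDerivWithinAt (u · t) (ux x t) (Icc a b) x)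
    (hut : ∀ x ∈ Icc a b, ∀ t ∈ U, HasDerivAt (u x ·) (ut x t) t)
    (huxt : ∀ x ∈ Icc a b, ∀ t ∈ U, HasDerivAt (ux x ·) (uxt x t) t)
    (hux_cont : ContinuousOn (fun p : ℝ × ℝ => ux p.1 p.2) (Icc a b ×ˢ U))
    (huxt_cont : ContinuousOn (fun p : ℝ × ℝ => uxt p.1 p.2) (Icc a b ×ˢ U))
    {x t : ℝ} (hx : x ∈ Icc a b) (ht : t ∈ U) :
    ut x t = ut a t + ∫ y in a..x, uxt y t := by
  have hax : Icc a x ⊆ Icc a b := Icc_subset_Icc_right hx.2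
  have hspace : ∀ τ ∈ U, u x τ = u a τ + ∫ y in a..x, ux y τ := fun τ hτ => by
    rw [integral_eq_sub_of_hasDerivAt_of_le hx.1
      (fun y hy => (hux y (hax hy) τ hτ).continuousWithinAt.mono hax)
      (fun y hy => (hux y (hax (Ioo_subset_Icc_self hy)) τ hτ).hasDerivAt
        (Icc_mem_nhds hy.1 (hy.2.trans_le hx.2)))
      (((hux_cont.uncurry_right τ hτ).mono hax).intervalIntegrable_of_Icc hx.1)]
    ring
  have htime := (hut a (left_mem_Icc.2 (hx.1.trans hx.2)) t ht).add
    (hasDerivAt_intervalIntegral_of_continuousOn_prod hx.1 (hU.mem_nhds ht)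
      (fun τ hτ => (hux_cont.uncurry_right τ hτ).mono hax) (huxt_cont.mono (prod_mono_left hax))
      (fun y hy τ hτ => huxt y (hax hy) τ hτ))
  exact (hut x hx t ht).unique
    (htime.congr_of_eventuallyEq (eventually_of_mem (hU.mem_nhds ht) hspace))

theorem hasDerivAt_timeDeriv_eq_mixedPartial (hU : IsOpen U)
    (hux : ∀ x ∈ Icc a b, ∀ t ∈ U, HasDerivWithinAt (u · t) (ux x t) (Icc a b) x)
    (hut : ∀ x ∈ Icc a b, ∀ t ∈ U, HasDerivAt (u x ·) (ut x t) t)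
    (huxt : ∀ x ∈ Icc a b, ∀ t ∈ U, HasDerivAt (ux x ·) (uxt x t) t)
    (hux_cont : ContinuousOn (fun p : ℝ × ℝ => ux p.1 p.2) (Icc a b ×ˢ U))
    (huxt_cont : ContinuousOn (fun p : ℝ × ℝ => uxt p.1 p.2) (Icc a b ×ˢ U))
    {x t : ℝ} (hx : x ∈ Ioo a b) (ht : t ∈ U) :
    HasDerivAt (ut · t) (uxt x t) x := by
  have hcont := huxt_cont.uncurry_right t ht
  have hFTC : HasDerivAt (fun x => ut a t + ∫ y in a..x, uxt y t) (uxt x t) x :=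
    (integral_hasDerivAt_right
      ((hcont.mono (Icc_subset_Icc_right hx.2.le)).intervalIntegrable_of_Icc hx.1.le)
      (hcont.mono Ioo_subset_Icc_self |>.stronglyMeasurableAtFilter isOpen_Ioo x hx)
      (hcont.continuousAt (Icc_mem_nhds hx.1 hx.2))).const_add _
  exact hFTC.congr_of_eventuallyEq (eventually_of_mem (Ioo_mem_nhds hx.1 hx.2) fun y hy =>
    timeDeriv_eq_add_integral_mixedPartial hU hux hut huxt hux_cont huxt_cont
      (Ioo_subset_Icc_self hy) ht)

end MixedPartials

section FixedTime

variable {a b : ℝ} {p p' q q' : ℝ → ℝ}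

theorem integral_mul_div_sqrt_one_add_sq_eq_neg (hab : a ≤ b)
    (hp : ∀ x ∈ Ioo a b, HasDerivAt p (p' x) x) (hq : ∀ x ∈ Ioo a b, HasDerivAt q (q' x) x)
    (hp_cont : ContinuousOn p (Icc a b)) (hp'_cont : ContinuousOn p' (Icc a b))
    (hq_cont : ContinuousOn q (Icc a b)) (hq'_cont : ContinuousOn q' (Icc a b))
    (hqa : q a = 0) (hqb : q b = 0) :
    ∫ x in a..b, q' x * (p x / √(1 + p x ^ 2)) =
      -∫ x in a..b, q x * (p' x / ((1 + p x ^ 2) * √(1 + p x ^ 2))) := by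
  have hφ : ContinuousOn (fun x => p x / √(1 + p x ^ 2)) (Icc a b) :=
    continuous_div_sqrt_one_add_sq.comp_continuousOn hp_cont
  have hφ' : ContinuousOn (fun x => p' x / ((1 + p x ^ 2) * √(1 + p x ^ 2))) (Icc a b) :=
    hp'_cont.div (by fun_prop) fun x _ => by positivity
  have hparts := integral_deriv_mul_eq_sub_of_hasDerivAt (uIcc_of_le hab ▸ hq_cont)
    (uIcc_of_le hab ▸ hφ) (by simpa [hab] using hq)
    (by simpa [hab] using fun x hx => (hp x hx).div_sqrt_one_add_sq)
    (hq'_cont.intervalIntegrable_of_Icc hab) (hφ'.intervalIntegrable_of_Icc hab)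
  rw [integral_add ((hq'_cont.fun_mul hφ).intervalIntegrable_of_Icc hab)
    ((hq_cont.fun_mul hφ').intervalIntegrable_of_Icc hab), hqa, hqb] at hparts
  linarith

theorem integral_mul_div_sqrt_one_add_sq_eq_of_flow (A : ℝ) (hab : a ≤ b)
    (hp : ∀ x ∈ Ioo a b, HasDerivAt p (p' x) x) (hq : ∀ x ∈ Ioo a b, HasDerivAt q (q' x) x)
    (hp_cont : ContinuousOn p (Icc a b)) (hp'_cont : ContinuousOn p' (Icc a b))
    (hq_cont : ContinuousOn q (Icc a b)) (hq'_cont : ContinuousOn q' (Icc a b))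
    (hqa : q a = 0) (hqb : q b = 0)
    (heq : ∀ x ∈ Ioo a b, q x = p' x / (1 + p x ^ 2) + A * √(1 + p x ^ 2)) :
    ∫ x in a..b, q' x * (p x / √(1 + p x ^ 2)) =
      -(∫ x in a..b, q x ^ 2 / √(1 + p x ^ 2)) + A * ∫ x in a..b, q x := by
  have hpointwise : EqOn (fun x => q x ^ 2 / √(1 + p x ^ 2))
      (fun x => q x * (p' x / ((1 + p x ^ 2) * √(1 + p x ^ 2))) + A * q x) (Ioo a b) :=
    fun x hx => by
      have hs : √(1 + p x ^ 2) ^ 2 = 1 + p x ^ 2 := Real.sq_sqrt (by positivity)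
      dsimp only
      rw [heq x hx, ← hs]
      field_simp
  have hφ' : ContinuousOn (fun x => p' x / ((1 + p x ^ 2) * √(1 + p x ^ 2))) (Icc a b) :=
    hp'_cont.div (by fun_prop) fun x _ => by positivity
  rw [integral_mul_div_sqrt_one_add_sq_eq_neg hab hp hq hp_cont hp'_cont hq_cont hq'_cont hqa hqb,
    integral_congr_Ioo_of_le hab hpointwise, integral_add
      ((hq_cont.fun_mul hφ').intervalIntegrable_of_Icc hab)
      ((hq_cont.intervalIntegrable_of_Icc hab).const_mul A), intervalIntegral.integral_const_mul]
  ring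

end FixedTime

theorem lyapunov_identity_graph_general (A a T : ℝ) (ha : 0 < a)
    (u ux ut uxx uxt : ℝ → ℝ → ℝ)
    (hux : ∀ x ∈ Icc (-a) a, ∀ t ∈ Ioo (0 : ℝ) T,
      HasDerivWithinAt (fun y => u y t) (ux x t) (Icc (-a) a) x)
    (huxx : ∀ x ∈ Icc (-a) a, ∀ t ∈ Ioo (0 : ℝ) T,
      HasDerivWithinAt (fun y => ux y t) (uxx x t) (Icc (-a) a) x)
    (hut : ∀ x ∈ Icc (-a) a, ∀ t ∈ Ioo (0 : ℝ) T,
      HasDerivAt (fun τ => u x τ) (ut x t) t)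
    (huxt : ∀ x ∈ Icc (-a) a, ∀ t ∈ Ioo (0 : ℝ) T,
      HasDerivAt (fun τ => ux x τ) (uxt x t) t)
    (hux_cont : ContinuousOn (fun p : ℝ × ℝ => ux p.1 p.2) (Icc (-a) a ×ˢ Ioo 0 T))
    (hut_cont : ContinuousOn (fun p : ℝ × ℝ => ut p.1 p.2) (Icc (-a) a ×ˢ Ioo 0 T))
    (huxx_cont : ContinuousOn (fun p : ℝ × ℝ => uxx p.1 p.2) (Icc (-a) a ×ˢ Ioo 0 T))
    (huxt_cont : ContinuousOn (fun p : ℝ × ℝ => uxt p.1 p.2) (Icc (-a) a ×ˢ Ioo 0 T))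
    (hbc : ∀ t ∈ Ioo (0 : ℝ) T, u (-a) t = 0 ∧ u a t = 0)
    (hpde : ∀ x ∈ Ioo (-a) a, ∀ t ∈ Ioo (0 : ℝ) T,
      ut x t = uxx x t / (1 + (ux x t) ^ 2) + A * Real.sqrt (1 + (ux x t) ^ 2)) :
    ∃ J' I' : ℝ → ℝ, ∀ t ∈ Ioo (0 : ℝ) T,
      HasDerivAt (fun τ => ∫ x in (-a)..a, Real.sqrt (1 + (ux x τ) ^ 2)) (J' t) t ∧
      HasDerivAt (fun τ => ∫ x in (-a)..a, u x τ) (I' t) t ∧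
      J' t = -(∫ x in (-a)..a, (ut x t) ^ 2 / Real.sqrt (1 + (ux x t) ^ 2))
              + A * I' t := by
  have haa : -a ≤ a := by linarith
  refine ⟨fun t => ∫ x in (-a)..a, uxt x t * (ux x t / √(1 + ux x t ^ 2)),
    fun t => ∫ x in (-a)..a, ut x t, fun t ht => ⟨?_, ?_, ?_⟩⟩
  · refine hasDerivAt_intervalIntegral_of_continuousOn_prod haa (Ioo_mem_nhds ht.1 ht.2)
      (fun τ hτ => ?_) (huxt_cont.fun_mul (continuous_div_sqrt_one_add_sq.comp_continuousOn
        hux_cont)) fun x hx τ hτ => (huxt x hx τ hτ).sqrt_one_add_sq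
    have := hux_cont.uncurry_right τ hτ
    fun_prop
  · exact hasDerivAt_intervalIntegral_of_continuousOn_prod haa (Ioo_mem_nhds ht.1 ht.2)
      (fun τ hτ x hx => (hux x hx τ hτ).continuousWithinAt) hut_cont hut
  · have hboundary : ∀ x, (∀ τ ∈ Ioo (0 : ℝ) T, u x τ = 0) → x ∈ Icc (-a) a → ut x t = 0 :=
      fun x h0 hx => (hut x hx t ht).eq_zero_of_eventually_eq_zero
        (eventually_of_mem (Ioo_mem_nhds ht.1 ht.2) h0)
    exact integral_mul_div_sqrt_one_add_sq_eq_of_flow A haa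
      (fun x hx => (huxx x (Ioo_subset_Icc_self hx) t ht).hasDerivAt (Icc_mem_nhds hx.1 hx.2))
      (fun x hx => hasDerivAt_timeDeriv_eq_mixedPartial isOpen_Ioo hux hut huxt hux_cont
        huxt_cont hx ht)
      (hux_cont.uncurry_right t ht) (huxx_cont.uncurry_right t ht)
      (hut_cont.uncurry_right t ht) (huxt_cont.uncurry_right t ht)
      (hboundary _ (fun τ hτ => (hbc τ hτ).1) (left_mem_Icc.2 haa))
      (hboundary _ (fun τ hτ => (hbc τ hτ).2) (right_mem_Icc.2 haa)) (hpde · · t ht)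

/-- (Step 4 of Proposition 4.2.) For a graph-flow solution with fixed
endpoints, the length `J(t) = ∫√(1+u_x²)dx` and the area `I(t) = ∫u dx` are
differentiable and satisfy the Lyapunov identity
`J'(t) = -∫ u_t²/√(1+u_x²) dx + A·I'(t)`. -/
theorem lyapunov_identity_graph (A a T : ℝ) (hA : 0 < A) (ha : 0 < a) (hT : 0 < T)
    (u ux ut uxx uxt : ℝ → ℝ → ℝ)
    (hu_cont : ContinuousOn (fun p : ℝ × ℝ => u p.1 p.2) (Icc (-a) a ×ˢ Ioo 0 T))
    (hux : ∀ x ∈ Icc (-a) a, ∀ t ∈ Ioo (0 : ℝ) T,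
      HasDerivWithinAt (fun y => u y t) (ux x t) (Icc (-a) a) x)
    (huxx : ∀ x ∈ Icc (-a) a, ∀ t ∈ Ioo (0 : ℝ) T,
      HasDerivWithinAt (fun y => ux y t) (uxx x t) (Icc (-a) a) x)
    (hut : ∀ x ∈ Icc (-a) a, ∀ t ∈ Ioo (0 : ℝ) T,
      HasDerivAt (fun τ => u x τ) (ut x t) t)
    (huxt : ∀ x ∈ Icc (-a) a, ∀ t ∈ Ioo (0 : ℝ) T,
      HasDerivAt (fun τ => ux x τ) (uxt x t) t)
    (hux_cont : ContinuousOn (fun p : ℝ × ℝ => ux p.1 p.2) (Icc (-a) a ×ˢ Ioo 0 T))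
    (hut_cont : ContinuousOn (fun p : ℝ × ℝ => ut p.1 p.2) (Icc (-a) a ×ˢ Ioo 0 T))
    (huxx_cont : ContinuousOn (fun p : ℝ × ℝ => uxx p.1 p.2) (Icc (-a) a ×ˢ Ioo 0 T))
    (huxt_cont : ContinuousOn (fun p : ℝ × ℝ => uxt p.1 p.2) (Icc (-a) a ×ˢ Ioo 0 T))
    (hbc : ∀ t ∈ Ioo (0 : ℝ) T, u (-a) t = 0 ∧ u a t = 0)
    (hpde : ∀ x ∈ Ioo (-a) a, ∀ t ∈ Ioo (0 : ℝ) T,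
      ut x t = uxx x t / (1 + (ux x t) ^ 2) + A * Real.sqrt (1 + (ux x t) ^ 2)) :
    ∃ J' I' : ℝ → ℝ, ∀ t ∈ Ioo (0 : ℝ) T,
      HasDerivAt (fun τ => ∫ x in (-a)..a, Real.sqrt (1 + (ux x τ) ^ 2)) (J' t) t ∧
      HasDerivAt (fun τ => ∫ x in (-a)..a, u x τ) (I' t) t ∧
      J' t = -(∫ x in (-a)..a, (ut x t) ^ 2 / Real.sqrt (1 + (ux x t) ^ 2))
              + A * I' t :=
  lyapunov_identity_graph_general A a T ha u ux ut uxx uxt hux huxx hut huxt hux_cont hut_cont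
    huxx_cont huxt_cont hbc hpde
end

section
/- Let A > 0, a > 0, and let u : [−a,a] × (0,∞) → ℝ have u, u_x, u_t, u_xx, u_xt continuous on [−a,a] × (0,∞), satisfy u(−a,t) = u(a,t) = 0 for all t > 0, solve the graph flow equation u_t = u_xx/(1 + u_x²) + A√(1 + u_x²) on (−a,a) × (0,∞), and suppose u is uniformly bounded on [−a,a] × (0,∞). Then for every ε > 0 the integral ∫_ε^∞ ∫_{−a}^{a} u_t(x,t)² / √(1 + u_x(x,t)²) dx dt is finite. -/
/-!
Along the flow the density `E = A u - √(1 + u_x²)` has `∂ₜE = A u_t - u_x u_xt / √(1 + u_x²)`.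
At each fixed time, integrating by parts in `x` (with the equation and `u_t = 0` at `x = ±a`)
shows that `∫ ∂ₜE dx` equals the dissipation `∫ u_t² / √(1 + u_x²) dx`. Integrating in time, the
dissipation over `[ε, T] × [-a, a]` is `∫ (E(·, T) - E(·, ε)) dx`, bounded independently of `T`
since `u` is bounded and `√(1 + u_x²) ≥ 0`; monotone convergence in `T` concludes. The integration
by parts needs `∂ₓu_t = u_xt`, which follows from the continuity of `u_xt` through uniform
convergence of difference quotients in `t`.
-/

open Set MeasureTheory Filter Topology

theorem hasDerivAt_sqrt_one_add_sq {v : ℝ → ℝ} {v' x : ℝ} (h : HasDerivAt v v' x) :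
    HasDerivAt (fun y => √(1 + v y ^ 2)) (v x * v' / √(1 + v x ^ 2)) x := by
  have h1 : HasDerivAt (fun y => 1 + v y ^ 2) (2 * v x ^ 1 * v') x := (h.pow 2).const_add 1
  convert h1.sqrt (by positivity) using 1
  field_simp

theorem hasDerivAt_div_sqrt_one_add_sq {v : ℝ → ℝ} {v' x : ℝ} (h : HasDerivAt v v' x) :
    HasDerivAt (fun y => v y / √(1 + v y ^ 2)) (v' / ((1 + v x ^ 2) * √(1 + v x ^ 2))) x := by
  have hs : 0 < √(1 + v x ^ 2) := by positivity
  refine (h.div (hasDerivAt_sqrt_one_add_sq h) hs.ne').congr_deriv ?_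
  have hsq : √(1 + v x ^ 2) ^ 2 = 1 + v x ^ 2 := Real.sq_sqrt (by positivity)
  rw [div_eq_div_iff (by positivity) (by positivity)]
  field_simp
  linear_combination v' * v x ^ 2 * hsq

theorem tendstoUniformlyOn_slope_of_uniformContinuousOn {f f' : ℝ → ℝ → ℝ} {U : Set ℝ}
    {t δ : ℝ} (hδ : 0 < δ) (hf : ∀ y ∈ U, ∀ s ∈ Icc t (t + δ), HasDerivAt (f y) (f' y s) s)
    (hf' : UniformContinuousOn (fun p : ℝ × ℝ => f' p.1 p.2) (U ×ˢ Icc t (t + δ))) :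
    TendstoUniformlyOn (fun h y => h⁻¹ * (f y (t + h) - f y t)) (fun y => f' y t) (𝓝[>] 0) U := by
  rw [Metric.tendstoUniformlyOn_iff]
  intro η hη
  obtain ⟨r, hr, hfr⟩ := Metric.uniformContinuousOn_iff.1 hf' η hη
  filter_upwards [Ioo_mem_nhdsGT (lt_min hr hδ)] with h ⟨hh0, hh⟩ y hy
  have hsub : Icc t (t + h) ⊆ Icc t (t + δ) :=
    Icc_subset_Icc_right (by linarith [min_le_right r δ])
  obtain ⟨ξ, hξ, hslope⟩ := exists_hasDerivAt_eq_slope (f y) (f' y) (lt_add_of_pos_right t hh0)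
    (fun s hs => (hf y hy s (hsub hs)).continuousAt.continuousWithinAt)
    (fun s hs => hf y hy s (hsub (Ioo_subset_Icc_self hs)))
  rw [add_sub_cancel_left, div_eq_inv_mul] at hslope
  rw [← hslope]
  refine hfr (y, t) ⟨hy, le_rfl, by linarith⟩ (y, ξ) ⟨hy, hsub (Ioo_subset_Icc_self hξ)⟩ ?_
  rw [Prod.dist_eq, dist_self, Real.dist_eq, abs_of_neg (by linarith [hξ.1])]
  exact max_lt hr (by linarith [hξ.2, min_le_left r δ])

theorem hasDerivAt_partial_swap {u ux ut uxt : ℝ → ℝ → ℝ} {U : Set ℝ} {t δ x : ℝ}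
    (hU : IsOpen U) (hδ : 0 < δ)
    (hux : ∀ y ∈ U, ∀ s ∈ Icc t (t + δ), HasDerivAt (u · s) (ux y s) y)
    (hut : ∀ y ∈ U, HasDerivAt (u y) (ut y t) t)
    (huxt : ∀ y ∈ U, ∀ s ∈ Icc t (t + δ), HasDerivAt (ux y) (uxt y s) s)
    (huxt_uc : UniformContinuousOn (fun p : ℝ × ℝ => uxt p.1 p.2) (U ×ˢ Icc t (t + δ)))
    (hx : x ∈ U) : HasDerivAt (ut · t) (uxt x t) x := by
  refine hasDerivAt_of_tendstoUniformlyOn hU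
    (tendstoUniformlyOn_slope_of_uniformContinuousOn hδ huxt huxt_uc) ?_
    (fun y hy => by simpa using (hut y hy).tendsto_slope_zero_right) hx
  filter_upwards [Ioo_mem_nhdsGT hδ] with h ⟨hh0, hhδ⟩ y hy
  exact ((hux y hy (t + h) ⟨by linarith, by linarith⟩).sub
    (hux y hy t ⟨le_rfl, by linarith⟩)).const_mul h⁻¹

theorem integral_sq_div_sqrt_one_add_sq_eq {A b c : ℝ} (hbc : b ≤ c) {p p' w w' : ℝ → ℝ}
    (hp : ∀ x ∈ Ioo b c, HasDerivAt p (p' x) x) (hw : ∀ x ∈ Ioo b c, HasDerivAt w (w' x) x)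
    (hp_cont : ContinuousOn p (Icc b c)) (hp'_cont : ContinuousOn p' (Icc b c))
    (hw_cont : ContinuousOn w (Icc b c)) (hw'_cont : ContinuousOn w' (Icc b c))
    (hwb : w b = 0) (hwc : w c = 0)
    (heq : ∀ x ∈ Ioo b c, w x = p' x / (1 + p x ^ 2) + A * √(1 + p x ^ 2)) :
    ∫ x in b..c, w x ^ 2 / √(1 + p x ^ 2) =
      ∫ x in b..c, (A * w x - p x * w' x / √(1 + p x ^ 2)) := by
  have hint {f : ℝ → ℝ} (hf : ContinuousOn f (Icc b c)) : IntervalIntegrable f volume b c :=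
    hf.intervalIntegrable_of_Icc hbc
  have hIoo : Ioo (min b c) (max b c) = Ioo b c := by rw [min_eq_left hbc, max_eq_right hbc]
  have hsqrt_cont : ContinuousOn (fun x => √(1 + p x ^ 2)) (Icc b c) :=
    (continuousOn_const.add (hp_cont.pow 2)).sqrt
  set v : ℝ → ℝ := fun x => p x / √(1 + p x ^ 2)
  set v' : ℝ → ℝ := fun x => p' x / ((1 + p x ^ 2) * √(1 + p x ^ 2))
  have hv_cont : ContinuousOn v (uIcc b c) := by
    rw [uIcc_of_le hbc]; exact hp_cont.div hsqrt_cont fun x _ => by positivity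
  have hv' : IntervalIntegrable v' volume b c :=
    hint (hp'_cont.div ((continuousOn_const.add (hp_cont.pow 2)).mul hsqrt_cont)
      fun x _ => by positivity)
  have hdiff : EqOn (fun x => w x ^ 2 / √(1 + p x ^ 2) - (A * w x - p x * w' x / √(1 + p x ^ 2)))
      (fun x => w' x * v x + w x * v' x) (Ioo b c) := by
    intro x hx
    simp only [v, v']
    rw [heq x hx]
    field_simp
    ring
  have hexact : ∫ x in b..c, (w' x * v x + w x * v' x) = 0 := by
    rw [intervalIntegral.integral_deriv_mul_eq_sub_of_hasDerivAt (u := w) (v := v)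
      (by rwa [uIcc_of_le hbc]) hv_cont (by rwa [hIoo])
      (by rw [hIoo]; exact fun x hx => hasDerivAt_div_sqrt_one_add_sq (hp x hx))
      (hint hw'_cont) hv', hwb, hwc]
    ring
  rw [← sub_eq_zero, ← intervalIntegral.integral_sub,
    intervalIntegral.integral_congr_Ioo_of_le hbc hdiff, hexact]
  · exact hint ((hw_cont.pow 2).div hsqrt_cont fun x _ => by positivity)
  · exact hint ((continuousOn_const.mul hw_cont).sub
      ((hp_cont.mul hw'_cont).div hsqrt_cont fun x _ => by positivity))

theorem integrableOn_Ici_prod_of_integral_norm_le {f : ℝ × ℝ → ℝ} {S : Set ℝ} {ε C : ℝ}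
    (hS : MeasurableSet S) (hf : ∀ T, IntegrableOn f (Icc ε T ×ˢ S))
    (hC : ∀ T, ε ≤ T → ∫ p in Icc ε T ×ˢ S, ‖f p‖ ≤ C) :
    IntegrableOn f (Ici ε ×ˢ S) := by
  have hsub (T : ℝ) : Icc ε T ×ˢ S ⊆ Ici ε ×ˢ S := prod_mono Icc_subset_Ici_self subset_rfl
  have hcover : AECover (volume.restrict (Ici ε ×ˢ S)) atTop fun T => Icc ε T ×ˢ S := by
    refine ⟨?_, fun T => measurableSet_Icc.prod hS⟩
    filter_upwards [ae_restrict_mem (measurableSet_Ici.prod hS)] with p hp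
    filter_upwards [eventually_ge_atTop p.1] with T hT
    exact ⟨⟨hp.1, hT⟩, hp.2⟩
  refine hcover.integrable_of_integral_norm_bounded C (fun T => ?_) ?_
  · rw [IntegrableOn, Measure.restrict_restrict_of_subset (hsub T)]
    exact hf T
  · filter_upwards [eventually_ge_atTop ε] with T hT
    rw [Measure.restrict_restrict_of_subset (hsub T)]
    exact hC T hT

theorem integrableOn_Ici_prod_of_integral_eq_deriv {F G E : ℝ → ℝ → ℝ} {S : Set ℝ} {ε B : ℝ}
    (hS : IsCompact S) (hF : ∀ x ∈ S, ∀ t ∈ Ici ε, 0 ≤ F x t)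
    (hF_cont : ContinuousOn (fun p : ℝ × ℝ => F p.1 p.2) (S ×ˢ Ici ε))
    (hG_cont : ContinuousOn (fun p : ℝ × ℝ => G p.1 p.2) (S ×ˢ Ici ε))
    (hFG : ∀ t ∈ Ici ε, ∫ x in S, F x t = ∫ x in S, G x t)
    (hE : ∀ x ∈ S, ∀ t ∈ Ici ε, HasDerivAt (E x) (G x t) t)
    (hE_le : ∀ x ∈ S, ∀ t ∈ Ici ε, E x t ≤ B) (hE_int : IntegrableOn (E · ε) S) :
    IntegrableOn (fun p : ℝ × ℝ => F p.2 p.1) (Ici ε ×ˢ S) := by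
  have hSm : MeasurableSet S := hS.measurableSet
  have hswap {H : ℝ → ℝ → ℝ} (hH : ContinuousOn (fun p : ℝ × ℝ => H p.1 p.2) (S ×ˢ Ici ε))
      (T : ℝ) : IntegrableOn (fun p : ℝ × ℝ => H p.2 p.1) (Icc ε T ×ˢ S) :=
    (hH.comp continuous_swap.continuousOn fun p hp => ⟨hp.2, hp.1.1⟩).integrableOn_compact
      (isCompact_Icc.prod hS)
  refine integrableOn_Ici_prod_of_integral_norm_le hSm (hswap hF_cont)
    (C := ∫ x in S, (B - E x ε)) fun T hT => ?_
  have hG_int : IntegrableOn (fun p : ℝ × ℝ => G p.1 p.2) (S ×ˢ Icc ε T) :=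
    (hG_cont.mono (prod_mono subset_rfl Icc_subset_Ici_self)).integrableOn_compact
      (hS.prod isCompact_Icc)
  have hG_slices : IntegrableOn (fun x => ∫ t in Icc ε T, G x t) S := by
    rw [IntegrableOn, Measure.volume_eq_prod, ← Measure.prod_restrict] at hG_int
    exact hG_int.integral_prod_left
  have hFTC : ∀ x ∈ S, ∫ t in Icc ε T, G x t = E x T - E x ε := by
    intro x hx
    rw [integral_Icc_eq_integral_Ioc, ← intervalIntegral.integral_of_le hT]
    refine intervalIntegral.integral_eq_sub_of_hasDerivAt
      (fun t ht => hE x hx t (by rw [uIcc_of_le hT] at ht; exact ht.1)) ?_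
    exact ((hG_cont.uncurry_left x hx).mono Icc_subset_Ici_self).intervalIntegrable_of_Icc hT
  calc ∫ p in Icc ε T ×ˢ S, ‖F p.2 p.1‖
      = ∫ p in Icc ε T ×ˢ S, F p.2 p.1 :=
        setIntegral_congr_fun (measurableSet_Icc.prod hSm) fun p hp =>
          Real.norm_of_nonneg (hF _ hp.2 _ hp.1.1)
    _ = ∫ t in Icc ε T, ∫ x in S, F x t := setIntegral_prod _ (hswap hF_cont T)
    _ = ∫ t in Icc ε T, ∫ x in S, G x t :=
        setIntegral_congr_fun measurableSet_Icc fun t ht => hFG t ht.1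
    _ = ∫ p in Icc ε T ×ˢ S, G p.2 p.1 := (setIntegral_prod _ (hswap hG_cont T)).symm
    _ = ∫ x in S, ∫ t in Icc ε T, G x t :=
        (setIntegral_prod_swap S (Icc ε T) fun p : ℝ × ℝ => G p.1 p.2).trans
          (setIntegral_prod _ hG_int)
    _ ≤ ∫ x in S, (B - E x ε) :=
        setIntegral_mono_on hG_slices
          ((integrableOn_const hS.measure_lt_top.ne).sub hE_int) hSm fun x hx => by
            rw [hFTC x hx]
            linarith [hE_le x hx T hT]

theorem dissipation_integrable_general (A a : ℝ) (ha : 0 < a)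
    (u ux ut uxx uxt : ℝ → ℝ → ℝ)
    (hu_cont : ContinuousOn (fun p : ℝ × ℝ => u p.1 p.2) (Icc (-a) a ×ˢ Ioi 0))
    (hux : ∀ x ∈ Icc (-a) a, ∀ t ∈ Ioi (0 : ℝ),
      HasDerivWithinAt (fun y => u y t) (ux x t) (Icc (-a) a) x)
    (huxx : ∀ x ∈ Icc (-a) a, ∀ t ∈ Ioi (0 : ℝ),
      HasDerivWithinAt (fun y => ux y t) (uxx x t) (Icc (-a) a) x)
    (hut : ∀ x ∈ Icc (-a) a, ∀ t ∈ Ioi (0 : ℝ),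
      HasDerivAt (fun τ => u x τ) (ut x t) t)
    (huxt : ∀ x ∈ Icc (-a) a, ∀ t ∈ Ioi (0 : ℝ),
      HasDerivAt (fun τ => ux x τ) (uxt x t) t)
    (hux_cont : ContinuousOn (fun p : ℝ × ℝ => ux p.1 p.2) (Icc (-a) a ×ˢ Ioi 0))
    (hut_cont : ContinuousOn (fun p : ℝ × ℝ => ut p.1 p.2) (Icc (-a) a ×ˢ Ioi 0))
    (huxx_cont : ContinuousOn (fun p : ℝ × ℝ => uxx p.1 p.2) (Icc (-a) a ×ˢ Ioi 0))
    (huxt_cont : ContinuousOn (fun p : ℝ × ℝ => uxt p.1 p.2) (Icc (-a) a ×ˢ Ioi 0))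
    (hbc : ∀ t ∈ Ioi (0 : ℝ), u (-a) t = 0 ∧ u a t = 0)
    (hpde : ∀ x ∈ Ioo (-a) a, ∀ t ∈ Ioi (0 : ℝ),
      ut x t = uxx x t / (1 + (ux x t) ^ 2) + A * Real.sqrt (1 + (ux x t) ^ 2))
    (hbdd : ∃ M : ℝ, ∀ x ∈ Icc (-a) a, ∀ t ∈ Ioi (0 : ℝ), |u x t| ≤ M) :
    ∀ ε : ℝ, 0 < ε →
      IntegrableOn
        (fun p : ℝ × ℝ => (ut p.2 p.1) ^ 2 / Real.sqrt (1 + (ux p.2 p.1) ^ 2))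
        (Ici ε ×ˢ Icc (-a) a) := by
  obtain ⟨M, hM⟩ := hbdd
  intro ε hε
  have haa : -a ≤ a := by linarith
  have hpos {t : ℝ} (ht : t ∈ Ici ε) : t ∈ Ioi (0 : ℝ) := hε.trans_le ht
  have hdom : Icc (-a) a ×ˢ Ici ε ⊆ Icc (-a) a ×ˢ Ioi 0 := prod_mono subset_rfl fun t => hpos
  have hut_bdry (t : ℝ) (ht : t ∈ Ioi (0 : ℝ)) : ut (-a) t = 0 ∧ ut a t = 0 := by
    have hut_zero {x : ℝ} (hx : x ∈ Icc (-a) a) (hu0 : ∀ τ ∈ Ioi (0 : ℝ), u x τ = 0) :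
        ut x t = 0 :=
      (hut x hx t ht).unique <| (hasDerivAt_const t 0).congr_of_eventuallyEq <|
        eventually_of_mem (Ioi_mem_nhds ht) hu0
    exact ⟨hut_zero (left_mem_Icc.2 haa) fun τ hτ => (hbc τ hτ).1,
      hut_zero (right_mem_Icc.2 haa) fun τ hτ => (hbc τ hτ).2⟩
  have hutx (t : ℝ) (ht : t ∈ Ioi (0 : ℝ)) (x : ℝ) (hx : x ∈ Ioo (-a) a) :
      HasDerivAt (ut · t) (uxt x t) x := by
    have hIcc : Icc t (t + 1) ⊆ Ioi 0 := fun s hs => lt_of_lt_of_le ht hs.1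
    refine hasDerivAt_partial_swap isOpen_Ioo one_pos
      (fun y hy s hs => (hux y (Ioo_subset_Icc_self hy) s (hIcc hs)).hasDerivAt
        (Icc_mem_nhds hy.1 hy.2))
      (fun y hy => hut y (Ioo_subset_Icc_self hy) t ht)
      (fun y hy s hs => huxt y (Ioo_subset_Icc_self hy) s (hIcc hs)) ?_ hx
    exact ((isCompact_Icc.prod isCompact_Icc).uniformContinuousOn_of_continuous
      (huxt_cont.mono (prod_mono subset_rfl hIcc))).mono
        (prod_mono Ioo_subset_Icc_self subset_rfl)
  have hsqrt_cont :
      ContinuousOn (fun p : ℝ × ℝ => √(1 + ux p.1 p.2 ^ 2)) (Icc (-a) a ×ˢ Ioi 0) :=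
    (continuousOn_const.add (hux_cont.pow 2)).sqrt
  refine integrableOn_Ici_prod_of_integral_eq_deriv
    (F := fun x t => ut x t ^ 2 / √(1 + ux x t ^ 2))
    (G := fun x t => A * ut x t - ux x t * uxt x t / √(1 + ux x t ^ 2))
    (E := fun x t => A * u x t - √(1 + ux x t ^ 2)) (B := |A| * M) isCompact_Icc
    (fun x _ t _ => by positivity) ?_ ?_ (fun t ht => ?_) (fun x hx t ht => ?_)
    (fun x hx t ht => ?_) ?_
  · exact ((hut_cont.pow 2).div hsqrt_cont fun p _ => by positivity).mono hdom
  · exact ((continuousOn_const.mul hut_cont).sub ((hux_cont.mul huxt_cont).div hsqrt_cont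
      fun p _ => by positivity)).mono hdom
  · simp only [integral_Icc_eq_integral_Ioc, ← intervalIntegral.integral_of_le haa]
    exact integral_sq_div_sqrt_one_add_sq_eq haa
      (fun x hx => (huxx x (Ioo_subset_Icc_self hx) t (hpos ht)).hasDerivAt
        (Icc_mem_nhds hx.1 hx.2))
      (hutx t (hpos ht)) (hux_cont.uncurry_right t (hpos ht))
      (huxx_cont.uncurry_right t (hpos ht))
      (hut_cont.uncurry_right t (hpos ht)) (huxt_cont.uncurry_right t (hpos ht))
      (hut_bdry t (hpos ht)).1 (hut_bdry t (hpos ht)).2 fun x hx => hpde x hx t (hpos ht)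
  · exact ((hut x hx t (hpos ht)).const_mul A).sub
      (hasDerivAt_sqrt_one_add_sq (huxt x hx t (hpos ht)))
  · have hAu : A * u x t ≤ |A| * M := calc
      A * u x t ≤ |A * u x t| := le_abs_self _
      _ = |A| * |u x t| := abs_mul _ _
      _ ≤ |A| * M := mul_le_mul_of_nonneg_left (hM x hx t (hpos ht)) (abs_nonneg A)
    linarith [Real.sqrt_nonneg (1 + ux x t ^ 2)]
  · exact (((continuousOn_const.mul hu_cont).sub hsqrt_cont).uncurry_right
      (f := fun x t => A * u x t - √(1 + ux x t ^ 2)) ε hε).integrableOn_compact isCompact_Icc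

/-- For a uniformly bounded global graph-flow solution with fixed
endpoints, the dissipation integral `∫_ε^∞ ∫_{-a}^a u_t²/√(1+u_x²) dx dt` is finite
(i.e. the integrand is integrable on `[ε,∞) × [-a,a]`) for every `ε > 0`. -/
theorem dissipation_integrable (A a : ℝ) (hA : 0 < A) (ha : 0 < a)
    (u ux ut uxx uxt : ℝ → ℝ → ℝ)
    (hu_cont : ContinuousOn (fun p : ℝ × ℝ => u p.1 p.2) (Icc (-a) a ×ˢ Ioi 0))
    (hux : ∀ x ∈ Icc (-a) a, ∀ t ∈ Ioi (0 : ℝ),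
      HasDerivWithinAt (fun y => u y t) (ux x t) (Icc (-a) a) x)
    (huxx : ∀ x ∈ Icc (-a) a, ∀ t ∈ Ioi (0 : ℝ),
      HasDerivWithinAt (fun y => ux y t) (uxx x t) (Icc (-a) a) x)
    (hut : ∀ x ∈ Icc (-a) a, ∀ t ∈ Ioi (0 : ℝ),
      HasDerivAt (fun τ => u x τ) (ut x t) t)
    (huxt : ∀ x ∈ Icc (-a) a, ∀ t ∈ Ioi (0 : ℝ),
      HasDerivAt (fun τ => ux x τ) (uxt x t) t)
    (hux_cont : ContinuousOn (fun p : ℝ × ℝ => ux p.1 p.2) (Icc (-a) a ×ˢ Ioi 0))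
    (hut_cont : ContinuousOn (fun p : ℝ × ℝ => ut p.1 p.2) (Icc (-a) a ×ˢ Ioi 0))
    (huxx_cont : ContinuousOn (fun p : ℝ × ℝ => uxx p.1 p.2) (Icc (-a) a ×ˢ Ioi 0))
    (huxt_cont : ContinuousOn (fun p : ℝ × ℝ => uxt p.1 p.2) (Icc (-a) a ×ˢ Ioi 0))
    (hbc : ∀ t ∈ Ioi (0 : ℝ), u (-a) t = 0 ∧ u a t = 0)
    (hpde : ∀ x ∈ Ioo (-a) a, ∀ t ∈ Ioi (0 : ℝ),
      ut x t = uxx x t / (1 + (ux x t) ^ 2) + A * Real.sqrt (1 + (ux x t) ^ 2))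
    (hbdd : ∃ M : ℝ, ∀ x ∈ Icc (-a) a, ∀ t ∈ Ioi (0 : ℝ), |u x t| ≤ M) :
    ∀ ε : ℝ, 0 < ε →
      IntegrableOn
        (fun p : ℝ × ℝ => (ut p.2 p.1) ^ 2 / Real.sqrt (1 + (ux p.2 p.1) ^ 2))
        (Ici ε ×ˢ Icc (-a) a) :=
  dissipation_integrable_general A a ha u ux ut uxx uxt hu_cont hux huxx hut huxt hux_cont hut_cont
    huxx_cont huxt_cont hbc hpde hbdd
end

section
/- Let A > 0, a > 0, T > 0, and let ρ : [0,π] × (0,T) → (0,∞) be such that ρ, ρ_θ, ρ_θθ, ρ_t, ρ_θt are continuous on [0,π] × (0,T), ρ(0,t) = ρ(π,t) = a for all t, and ρ solves the polar flow equation ρ_t = ρ_θθ/(ρ² + ρ_θ²) − (2ρ_θ² + ρ²)/(ρ(ρ_θ² + ρ²)) + (A/ρ)√(ρ_θ² + ρ²) on (0,π) × (0,T). Define the length L(t) = ∫₀^π √(ρ² + ρ_θ²) dθ, the area S(t) = (1/2)∫₀^π ρ² dθ, and the curvature κ(θ,t) = (ρ² + 2ρ_θ² − ρρ_θθ)/(ρ²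 + ρ_θ²)^{3/2}. Then L and S are differentiable on (0,T) and for every t ∈ (0,T): L′(t) = −∫₀^π (κ − A)² √(ρ² + ρ_θ²) dθ + A·S′(t). -/
/-!
Differentiating under the integral sign, `L' = ∫ (ρ ρ_t + ρ_θ ρ_θt) / s` with
`s = √(ρ² + ρ_θ²)`. Since `ρ_θt = ∂_θ ρ_t` and `ρ_t` vanishes at the fixed endpoints, integrating
the second term by parts against `ρ_θ / s`, whose `θ`-derivative is `ρ / s - ρ κ`, gives
`L' = ∫ κ ρ ρ_t`. The flow equation says `ρ ρ_t = (A - κ) s`, so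
`κ ρ ρ_t = -(κ - A)² s + A ρ ρ_t`, and `∫ ρ ρ_t = S'`.
-/

open Set Filter MeasureTheory Real intervalIntegral
open scoped Topology Interval

theorem ContinuousOn.comp_prodMk_const {α β γ : Type*} [TopologicalSpace α] [TopologicalSpace β]
    [TopologicalSpace γ] {g : α → β → γ} {s : Set α} {u : Set β}
    (hg : ContinuousOn (fun p : α × β => g p.1 p.2) (s ×ˢ u)) {x : β} (hx : x ∈ u) :
    ContinuousOn (fun θ => g θ x) s :=
  hg.comp (continuous_id.prodMk continuous_const).continuousOn fun _ hθ => ⟨hθ, hx⟩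

theorem hasDerivAt_intervalIntegral_of_continuousOn {F F' : ℝ → ℝ → ℝ} {a b t : ℝ} {U : Set ℝ}
    (hab : a ≤ b) (hU : IsOpen U) (ht : t ∈ U)
    (hF : ∀ x ∈ U, ContinuousOn (fun θ => F θ x) (Icc a b))
    (hF' : ContinuousOn (fun p : ℝ × ℝ => F' p.1 p.2) (Icc a b ×ˢ U))
    (hdiff : ∀ θ ∈ Icc a b, ∀ x ∈ U, HasDerivAt (F θ) (F' θ x) x) :
    HasDerivAt (fun x => ∫ θ in a..b, F θ x) (∫ θ in a..b, F' θ t) t := by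
  obtain ⟨ε, hε, hball⟩ := Metric.isOpen_iff.mp hU t ht
  have hsub : Metric.closedBall t (ε / 2) ⊆ U :=
    (Metric.closedBall_subset_ball (half_lt_self hε)).trans hball
  have hK : IsCompact (Icc a b ×ˢ Metric.closedBall t (ε / 2)) :=
    isCompact_Icc.prod (isCompact_closedBall t (ε / 2))
  obtain ⟨M, hM⟩ := hK.exists_bound_of_continuousOn (hF'.mono (prod_mono_right hsub))
  have hΙ : Ι a b ⊆ Icc a b := uIoc_of_le hab ▸ Ioc_subset_Icc_self
  refine (hasDerivAt_integral_of_dominated_loc_of_deriv_le (F := fun x θ => F θ x)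
    (F' := fun x θ => F' θ x) (bound := fun _ => M) (Metric.ball_mem_nhds t (half_pos hε))
    ?_ ((hF t ht).intervalIntegrable_of_Icc hab) ?_ ?_ intervalIntegrable_const ?_).2
  · filter_upwards [hU.mem_nhds ht] with x hx
    exact ((hF x hx).mono hΙ).aestronglyMeasurable measurableSet_uIoc
  · exact ((hF'.comp_prodMk_const ht).mono hΙ).aestronglyMeasurable measurableSet_uIoc
  · exact ae_of_all _ fun θ hθ x hx => hM (θ, x) ⟨hΙ hθ, Metric.ball_subset_closedBall hx⟩
  · exact ae_of_all _ fun θ hθ x hx => hdiff θ (hΙ hθ) x (hsub (Metric.ball_subset_closedBall hx))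

/-- Write `f φ x = f a x + ∫ a..φ, fθ · x`, differentiate in `x` under the integral sign, then in
`φ` by the fundamental theorem of calculus. -/
theorem hasDerivAt_partial_comm {f fθ ft fθt : ℝ → ℝ → ℝ} {a b θ t : ℝ} {U : Set ℝ}
    (hU : IsOpen U)
    (hfθ : ∀ φ ∈ Icc a b, ∀ x ∈ U, HasDerivWithinAt (fun ψ => f ψ x) (fθ φ x) (Icc a b) φ)
    (hft : ∀ φ ∈ Icc a b, ∀ x ∈ U, HasDerivAt (f φ) (ft φ x) x)
    (hfθt : ∀ φ ∈ Icc a b, ∀ x ∈ U, HasDerivAt (fθ φ) (fθt φ x) x)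
    (hfθ_cont : ContinuousOn (fun p : ℝ × ℝ => fθ p.1 p.2) (Icc a b ×ˢ U))
    (hfθt_cont : ContinuousOn (fun p : ℝ × ℝ => fθt p.1 p.2) (Icc a b ×ˢ U))
    (hθ : θ ∈ Ioo a b) (ht : t ∈ U) :
    HasDerivAt (fun φ => ft φ t) (fθt θ t) θ := by
  have hsub : ∀ φ ∈ Icc a b, Icc a φ ⊆ Icc a b := fun φ hφ => Icc_subset_Icc_right hφ.2
  have ha : a ∈ Icc a b := left_mem_Icc.2 (hθ.1.trans hθ.2).le
  have hf_eq : ∀ φ ∈ Icc a b, ∀ x ∈ U, f φ x = f a x + ∫ ψ in a..φ, fθ ψ x := by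
    intro φ hφ x hx
    rw [integral_eq_sub_of_hasDerivAt_of_le hφ.1
      (fun ψ hψ => (hfθ ψ (hsub φ hφ hψ) x hx).continuousWithinAt.mono (hsub φ hφ))
      (fun ψ hψ => (hfθ ψ (hsub φ hφ (Ioo_subset_Icc_self hψ)) x hx).hasDerivAt
        (Icc_mem_nhds hψ.1 (hψ.2.trans_le hφ.2)))
      (((hfθ_cont.comp_prodMk_const hx).mono (hsub φ hφ)).intervalIntegrable_of_Icc hφ.1)]
    ring
  have hft_eq : ∀ φ ∈ Icc a b, ft φ t = ft a t + ∫ ψ in a..φ, fθt ψ t := by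
    intro φ hφ
    have hI := hasDerivAt_intervalIntegral_of_continuousOn hφ.1 hU ht
      (fun x hx => (hfθ_cont.comp_prodMk_const hx).mono (hsub φ hφ))
      (hfθt_cont.mono (prod_mono_left (hsub φ hφ)))
      fun ψ hψ x hx => hfθt ψ (hsub φ hφ hψ) x hx
    refine (hft φ hφ t ht).unique (((hft a ha t ht).add hI).congr_of_eventuallyEq ?_)
    filter_upwards [hU.mem_nhds ht] with x hx using hf_eq φ hφ x hx
  have hslice := hfθt_cont.comp_prodMk_const ht
  have hI : HasDerivAt (fun φ => ∫ ψ in a..φ, fθt ψ t) (fθt θ t) θ :=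
    integral_hasDerivAt_right
      ((hslice.mono (hsub θ (Ioo_subset_Icc_self hθ))).intervalIntegrable_of_Icc hθ.1.le)
      ((hslice.mono Ioo_subset_Icc_self).stronglyMeasurableAtFilter isOpen_Ioo θ hθ)
      (hslice.continuousAt (Icc_mem_nhds hθ.1 hθ.2))
  refine (hI.const_add (ft a t)).congr_of_eventuallyEq ?_
  filter_upwards [Icc_mem_nhds hθ.1 hθ.2] with φ hφ using hft_eq φ hφ

noncomputable def polarCurvature (r r' r'' : ℝ) : ℝ :=
  (r ^ 2 + 2 * r' ^ 2 - r * r'') / (r ^ 2 + r' ^ 2) ^ ((3 : ℝ) / 2)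

theorem polarCurvature_mul_sqrt_pow_three {r r' r'' : ℝ} (hq : 0 < r ^ 2 + r' ^ 2) :
    polarCurvature r r' r'' * √(r ^ 2 + r' ^ 2) ^ 3 = r ^ 2 + 2 * r' ^ 2 - r * r'' := by
  rw [polarCurvature, rpow_div_two_eq_sqrt 3 hq.le, rpow_ofNat,
    div_mul_cancel₀ _ (pow_pos (sqrt_pos.2 hq) 3).ne']

theorem HasDerivAt.div_sqrt_sq_add_sq {f g : ℝ → ℝ} {g' x : ℝ} (hf : HasDerivAt f (g x) x)
    (hg : HasDerivAt g g' x) (hq : 0 < f x ^ 2 + g x ^ 2) :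
    HasDerivAt (fun y => g y / √(f y ^ 2 + g y ^ 2))
      (f x / √(f x ^ 2 + g x ^ 2) - f x * polarCurvature (f x) (g x) g') x := by
  have hs := sqrt_pos.2 hq
  refine (hg.div (((hf.fun_pow 2).fun_add (hg.fun_pow 2)).sqrt hq.ne') hs.ne').congr_deriv ?_
  have hκ := polarCurvature_mul_sqrt_pow_three (r'' := g') hq
  have hs2 := sq_sqrt hq.le
  field_simp
  linear_combination 2 * f x * hκ + (2 * g' - 2 * f x) * hs2

/-- The flow equation says that the normal velocity `r v / √(r² + r'²)` equals `A - κ`. -/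
theorem mul_eq_sub_polarCurvature_mul_sqrt {A r r' r'' v : ℝ} (hr : r ≠ 0)
    (hv : v = r'' / (r ^ 2 + r' ^ 2) - (2 * r' ^ 2 + r ^ 2) / (r * (r' ^ 2 + r ^ 2))
      + A / r * √(r' ^ 2 + r ^ 2)) :
    r * v = (A - polarCurvature r r' r'') * √(r ^ 2 + r' ^ 2) := by
  have hq : 0 < r ^ 2 + r' ^ 2 := by positivity
  have hκ := polarCurvature_mul_sqrt_pow_three (r'' := r'') hq
  have hs2 := sq_sqrt hq.le
  rw [add_comm (r' ^ 2)] at hv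
  subst hv
  field_simp
  linear_combination hκ - √(r ^ 2 + r' ^ 2) * polarCurvature r r' r'' * hs2

theorem hasDerivAt_integral_sqrt_sq_add_sq {f g f' g' : ℝ → ℝ → ℝ} {a b t : ℝ} {U : Set ℝ}
    (hab : a ≤ b) (hU : IsOpen U) (ht : t ∈ U)
    (hf : ContinuousOn (fun p : ℝ × ℝ => f p.1 p.2) (Icc a b ×ˢ U))
    (hg : ContinuousOn (fun p : ℝ × ℝ => g p.1 p.2) (Icc a b ×ˢ U))
    (hf' : ContinuousOn (fun p : ℝ × ℝ => f' p.1 p.2) (Icc a b ×ˢ U))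
    (hg' : ContinuousOn (fun p : ℝ × ℝ => g' p.1 p.2) (Icc a b ×ˢ U))
    (hq : ∀ θ ∈ Icc a b, ∀ x ∈ U, 0 < f θ x ^ 2 + g θ x ^ 2)
    (hdf : ∀ θ ∈ Icc a b, ∀ x ∈ U, HasDerivAt (f θ) (f' θ x) x)
    (hdg : ∀ θ ∈ Icc a b, ∀ x ∈ U, HasDerivAt (g θ) (g' θ x) x) :
    HasDerivAt (fun x => ∫ θ in a..b, √(f θ x ^ 2 + g θ x ^ 2))
      (∫ θ in a..b, (f θ t * f' θ t + g θ t * g' θ t) / √(f θ t ^ 2 + g θ t ^ 2)) t := by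
  refine hasDerivAt_intervalIntegral_of_continuousOn (F := fun θ x => √(f θ x ^ 2 + g θ x ^ 2))
    (F' := fun θ x => (f θ x * f' θ x + g θ x * g' θ x) / √(f θ x ^ 2 + g θ x ^ 2)) hab hU ht
    (fun x hx => (((hf.comp_prodMk_const hx).pow 2).add ((hg.comp_prodMk_const hx).pow 2)).sqrt)
    (((hf.mul hf').add (hg.mul hg')).div ((hf.pow 2).add (hg.pow 2)).sqrt
      fun p hp => (sqrt_pos.2 (hq p.1 hp.1 p.2 hp.2)).ne')
    fun θ hθ x hx => ?_
  refine ((((hdf θ hθ x hx).fun_pow 2).fun_add ((hdg θ hθ x hx).fun_pow 2)).sqrt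
    (hq θ hθ x hx).ne').congr_deriv ?_
  field_simp
  ring

theorem integral_length_variation_eq {r r' r'' v v' : ℝ → ℝ} {a b A : ℝ} (hab : a ≤ b)
    (hr : ContinuousOn r (Icc a b)) (hr' : ContinuousOn r' (Icc a b))
    (hr'' : ContinuousOn r'' (Icc a b)) (hv : ContinuousOn v (Icc a b))
    (hv' : ContinuousOn v' (Icc a b)) (hq : ∀ θ ∈ Icc a b, 0 < r θ ^ 2 + r' θ ^ 2)
    (hdr : ∀ θ ∈ Ioo a b, HasDerivAt r (r' θ) θ) (hdr' : ∀ θ ∈ Ioo a b, HasDerivAt r' (r'' θ) θ)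
    (hdv : ∀ θ ∈ Ioo a b, HasDerivAt v (v' θ) θ) (hva : v a = 0) (hvb : v b = 0)
    (hflow : ∀ θ ∈ Ioo a b, r θ * v θ =
      (A - polarCurvature (r θ) (r' θ) (r'' θ)) * √(r θ ^ 2 + r' θ ^ 2)) :
    ∫ θ in a..b, (r θ * v θ + r' θ * v' θ) / √(r θ ^ 2 + r' θ ^ 2) =
      -(∫ θ in a..b, (polarCurvature (r θ) (r' θ) (r'' θ) - A) ^ 2 * √(r θ ^ 2 + r' θ ^ 2))
        + A * ∫ θ in a..b, r θ * v θ := by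
  set s := fun θ => √(r θ ^ 2 + r' θ ^ 2)
  set κ := fun θ => polarCurvature (r θ) (r' θ) (r'' θ)
  have hs : ContinuousOn s (Icc a b) := ((hr.pow 2).add (hr'.pow 2)).sqrt
  have hs0 : ∀ θ ∈ Icc a b, s θ ≠ 0 := fun θ hθ => (sqrt_pos.2 (hq θ hθ)).ne'
  have hκ : ContinuousOn κ (Icc a b) :=
    (((hr.pow 2).add (continuousOn_const.mul (hr'.pow 2))).sub (hr.mul hr'')).div
      (((hr.pow 2).add (hr'.pow 2)).rpow_const fun θ hθ => Or.inl (hq θ hθ).ne')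
      fun θ hθ => (rpow_pos_of_pos (hq θ hθ) _).ne'
  have hF : IntervalIntegrable (fun θ => (r θ * v θ + r' θ * v' θ) / s θ) volume a b :=
    (((hr.mul hv).add (hr'.mul hv')).div hs hs0).intervalIntegrable_of_Icc hab
  have hK : IntervalIntegrable (fun θ => (κ θ - A) ^ 2 * s θ) volume a b :=
    (((hκ.sub continuousOn_const).pow 2).mul hs).intervalIntegrable_of_Icc hab
  have hrv : IntervalIntegrable (fun θ => r θ * v θ) volume a b :=
    (hr.mul hv).intervalIntegrable_of_Icc hab
  have hK_neg : IntervalIntegrable (fun θ => -((κ θ - A) ^ 2 * s θ)) volume a b := hK.neg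
  have hG : IntervalIntegrable (fun θ => -((κ θ - A) ^ 2 * s θ) + A * (r θ * v θ)) volume a b :=
    hK_neg.add (hrv.const_mul A)
  have hFG : ∫ θ in a..b, ((r θ * v θ + r' θ * v' θ) / s θ
      - (-((κ θ - A) ^ 2 * s θ) + A * (r θ * v θ))) = 0 := by
    -- integration by parts against `r' / s`; the boundary term `v r' / s` vanishes
    rw [integral_eq_sub_of_hasDerivAt_of_le (f := fun θ => v θ * (r' θ / s θ)) hab
      (hv.mul (hr'.div hs hs0)) ?_ (hF.sub hG)]
    · simp [hva, hvb]
    · intro θ hθ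
      refine ((hdv θ hθ).mul ((hdr θ hθ).div_sqrt_sq_add_sq (hdr' θ hθ)
        (hq θ (Ioo_subset_Icc_self hθ)))).congr_deriv ?_
      linear_combination (A - κ θ) * hflow θ hθ
  rw [integral_sub hF hG, sub_eq_zero] at hFG
  calc _ = ∫ θ in a..b, (-((κ θ - A) ^ 2 * s θ) + A * (r θ * v θ)) := hFG
    _ = _ := by rw [integral_add hK_neg (hrv.const_mul A), intervalIntegral.integral_neg,
      intervalIntegral.integral_const_mul]

theorem lyapunov_identity_polar_general (A a T : ℝ)
    (ρ ρθ ρθθ ρt ρθt : ℝ → ℝ → ℝ)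
    (hpos : ∀ θ ∈ Icc 0 Real.pi, ∀ t ∈ Ioo (0 : ℝ) T, 0 < ρ θ t)
    (hρ_cont : ContinuousOn (fun p : ℝ × ℝ => ρ p.1 p.2) (Icc 0 Real.pi ×ˢ Ioo 0 T))
    (hρθ : ∀ θ ∈ Icc 0 Real.pi, ∀ t ∈ Ioo (0 : ℝ) T,
      HasDerivWithinAt (fun φ => ρ φ t) (ρθ θ t) (Icc 0 Real.pi) θ)
    (hρθθ : ∀ θ ∈ Icc 0 Real.pi, ∀ t ∈ Ioo (0 : ℝ) T,
      HasDerivWithinAt (fun φ => ρθ φ t) (ρθθ θ t) (Icc 0 Real.pi) θ)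
    (hρt : ∀ θ ∈ Icc 0 Real.pi, ∀ t ∈ Ioo (0 : ℝ) T,
      HasDerivAt (fun τ => ρ θ τ) (ρt θ t) t)
    (hρθt : ∀ θ ∈ Icc 0 Real.pi, ∀ t ∈ Ioo (0 : ℝ) T,
      HasDerivAt (fun τ => ρθ θ τ) (ρθt θ t) t)
    (hρθ_cont : ContinuousOn (fun p : ℝ × ℝ => ρθ p.1 p.2) (Icc 0 Real.pi ×ˢ Ioo 0 T))
    (hρθθ_cont : ContinuousOn (fun p : ℝ × ℝ => ρθθ p.1 p.2) (Icc 0 Real.pi ×ˢ Ioo 0 T))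
    (hρt_cont : ContinuousOn (fun p : ℝ × ℝ => ρt p.1 p.2) (Icc 0 Real.pi ×ˢ Ioo 0 T))
    (hρθt_cont : ContinuousOn (fun p : ℝ × ℝ => ρθt p.1 p.2) (Icc 0 Real.pi ×ˢ Ioo 0 T))
    (hbc : ∀ t ∈ Ioo (0 : ℝ) T, ρ 0 t = a ∧ ρ Real.pi t = a)
    (hpde : ∀ θ ∈ Ioo 0 Real.pi, ∀ t ∈ Ioo (0 : ℝ) T,
      ρt θ t = ρθθ θ t / ((ρ θ t) ^ 2 + (ρθ θ t) ^ 2)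
        - (2 * (ρθ θ t) ^ 2 + (ρ θ t) ^ 2) / (ρ θ t * ((ρθ θ t) ^ 2 + (ρ θ t) ^ 2))
        + (A / ρ θ t) * Real.sqrt ((ρθ θ t) ^ 2 + (ρ θ t) ^ 2)) :
    ∃ L' S' : ℝ → ℝ, ∀ t ∈ Ioo (0 : ℝ) T,
      HasDerivAt (fun τ => ∫ θ in (0 : ℝ)..Real.pi,
        Real.sqrt ((ρ θ τ) ^ 2 + (ρθ θ τ) ^ 2)) (L' t) t ∧
      HasDerivAt (fun τ => (1 / 2) * ∫ θ in (0 : ℝ)..Real.pi, (ρ θ τ) ^ 2) (S' t) t ∧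
      L' t = -(∫ θ in (0 : ℝ)..Real.pi,
          (((ρ θ t) ^ 2 + 2 * (ρθ θ t) ^ 2 - ρ θ t * ρθθ θ t)
              / ((ρ θ t) ^ 2 + (ρθ θ t) ^ 2) ^ ((3 : ℝ) / 2) - A) ^ 2
            * Real.sqrt ((ρ θ t) ^ 2 + (ρθ θ t) ^ 2))
        + A * S' t := by
  have hπ : (0 : ℝ) ≤ π := pi_pos.le
  have hq : ∀ θ ∈ Icc 0 π, ∀ t ∈ Ioo (0 : ℝ) T, 0 < ρ θ t ^ 2 + ρθ θ t ^ 2 :=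
    fun θ hθ t ht => by have := hpos θ hθ t ht; positivity
  refine ⟨fun t => ∫ θ in 0..π, (ρ θ t * ρt θ t + ρθ θ t * ρθt θ t) / √(ρ θ t ^ 2 + ρθ θ t ^ 2),
    fun t => ∫ θ in 0..π, ρ θ t * ρt θ t, fun t ht => ⟨?_, ?_, ?_⟩⟩
  · exact hasDerivAt_integral_sqrt_sq_add_sq hπ isOpen_Ioo ht hρ_cont hρθ_cont hρt_cont hρθt_cont
      hq hρt hρθt
  · have hS := hasDerivAt_intervalIntegral_of_continuousOn (F := fun θ x => ρ θ x ^ 2)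
      (F' := fun θ x => 2 * ρ θ x * ρt θ x)
      hπ isOpen_Ioo ht (fun x hx => (hρ_cont.comp_prodMk_const hx).pow 2)
      ((continuousOn_const.mul hρ_cont).mul hρt_cont)
      fun θ hθ x hx => ((hρt θ hθ x hx).fun_pow 2).congr_deriv (by push_cast; ring)
    refine (hS.const_mul (1 / 2)).congr_deriv ?_
    rw [← intervalIntegral.integral_const_mul]
    congr 1 with θ
    ring
  · have hρt_bdry : ∀ θ ∈ Icc 0 π, (∀ τ ∈ Ioo 0 T, ρ θ τ = a) → ρt θ t = 0 :=
      fun θ hθ hconst => (hρt θ hθ t ht).unique ((hasDerivAt_const t a).congr_of_eventuallyEq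
        (eventually_of_mem (isOpen_Ioo.mem_nhds ht) hconst))
    exact integral_length_variation_eq hπ (hρ_cont.comp_prodMk_const ht)
      (hρθ_cont.comp_prodMk_const ht) (hρθθ_cont.comp_prodMk_const ht)
      (hρt_cont.comp_prodMk_const ht) (hρθt_cont.comp_prodMk_const ht) (hq · · t ht)
      (fun θ hθ => (hρθ θ (Ioo_subset_Icc_self hθ) t ht).hasDerivAt (Icc_mem_nhds hθ.1 hθ.2))
      (fun θ hθ => (hρθθ θ (Ioo_subset_Icc_self hθ) t ht).hasDerivAt (Icc_mem_nhds hθ.1 hθ.2))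
      (fun θ hθ => hasDerivAt_partial_comm isOpen_Ioo hρθ hρt hρθt hρθ_cont hρθt_cont hθ ht)
      (hρt_bdry 0 (left_mem_Icc.2 hπ) fun τ hτ => (hbc τ hτ).1)
      (hρt_bdry π (right_mem_Icc.2 hπ) fun τ hτ => (hbc τ hτ).2)
      fun θ hθ => mul_eq_sub_polarCurvature_mul_sqrt (hpos θ (Ioo_subset_Icc_self hθ) t ht).ne'
        (hpde θ hθ t ht)

/-- (Lemma 5.1.) For a solution of the polar flow equation with fixed
endpoints, the length `L(t) = ∫₀^π √(ρ² + ρ_θ²) dθ` and the enclosed area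
`S(t) = ½∫₀^π ρ² dθ` are differentiable with
`L'(t) = -∫₀^π (κ - A)² √(ρ² + ρ_θ²) dθ + A·S'(t)`, where
`κ = (ρ² + 2ρ_θ² - ρρ_θθ)/(ρ² + ρ_θ²)^{3/2}` is the curvature. -/
theorem lyapunov_identity_polar (A a T : ℝ) (hA : 0 < A) (ha : 0 < a) (hT : 0 < T)
    (ρ ρθ ρθθ ρt ρθt : ℝ → ℝ → ℝ)
    (hpos : ∀ θ ∈ Icc 0 Real.pi, ∀ t ∈ Ioo (0 : ℝ) T, 0 < ρ θ t)
    (hρ_cont : ContinuousOn (fun p : ℝ × ℝ => ρ p.1 p.2) (Icc 0 Real.pi ×ˢ Ioo 0 T))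
    (hρθ : ∀ θ ∈ Icc 0 Real.pi, ∀ t ∈ Ioo (0 : ℝ) T,
      HasDerivWithinAt (fun φ => ρ φ t) (ρθ θ t) (Icc 0 Real.pi) θ)
    (hρθθ : ∀ θ ∈ Icc 0 Real.pi, ∀ t ∈ Ioo (0 : ℝ) T,
      HasDerivWithinAt (fun φ => ρθ φ t) (ρθθ θ t) (Icc 0 Real.pi) θ)
    (hρt : ∀ θ ∈ Icc 0 Real.pi, ∀ t ∈ Ioo (0 : ℝ) T,
      HasDerivAt (fun τ => ρ θ τ) (ρt θ t) t)
    (hρθt : ∀ θ ∈ Icc 0 Real.pi, ∀ t ∈ Ioo (0 : ℝ) T,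
      HasDerivAt (fun τ => ρθ θ τ) (ρθt θ t) t)
    (hρθ_cont : ContinuousOn (fun p : ℝ × ℝ => ρθ p.1 p.2) (Icc 0 Real.pi ×ˢ Ioo 0 T))
    (hρθθ_cont : ContinuousOn (fun p : ℝ × ℝ => ρθθ p.1 p.2) (Icc 0 Real.pi ×ˢ Ioo 0 T))
    (hρt_cont : ContinuousOn (fun p : ℝ × ℝ => ρt p.1 p.2) (Icc 0 Real.pi ×ˢ Ioo 0 T))
    (hρθt_cont : ContinuousOn (fun p : ℝ × ℝ => ρθt p.1 p.2) (Icc 0 Real.pi ×ˢ Ioo 0 T))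
    (hbc : ∀ t ∈ Ioo (0 : ℝ) T, ρ 0 t = a ∧ ρ Real.pi t = a)
    (hpde : ∀ θ ∈ Ioo 0 Real.pi, ∀ t ∈ Ioo (0 : ℝ) T,
      ρt θ t = ρθθ θ t / ((ρ θ t) ^ 2 + (ρθ θ t) ^ 2)
        - (2 * (ρθ θ t) ^ 2 + (ρ θ t) ^ 2) / (ρ θ t * ((ρθ θ t) ^ 2 + (ρ θ t) ^ 2))
        + (A / ρ θ t) * Real.sqrt ((ρθ θ t) ^ 2 + (ρ θ t) ^ 2)) :
    ∃ L' S' : ℝ → ℝ, ∀ t ∈ Ioo (0 : ℝ) T,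
      HasDerivAt (fun τ => ∫ θ in (0 : ℝ)..Real.pi,
        Real.sqrt ((ρ θ τ) ^ 2 + (ρθ θ τ) ^ 2)) (L' t) t ∧
      HasDerivAt (fun τ => (1 / 2) * ∫ θ in (0 : ℝ)..Real.pi, (ρ θ τ) ^ 2) (S' t) t ∧
      L' t = -(∫ θ in (0 : ℝ)..Real.pi,
          (((ρ θ t) ^ 2 + 2 * (ρθ θ t) ^ 2 - ρ θ t * ρθθ θ t)
              / ((ρ θ t) ^ 2 + (ρθ θ t) ^ 2) ^ ((3 : ℝ) / 2) - A) ^ 2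
            * Real.sqrt ((ρ θ t) ^ 2 + (ρθ θ t) ^ 2))
        + A * S' t :=
  lyapunov_identity_polar_general A a T ρ ρθ ρθθ ρt ρθt hpos hρ_cont hρθ hρθθ hρt hρθt hρθ_cont
    hρθθ_cont hρt_cont hρθt_cont hbc hpde
end
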